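/- Let n be a nonnegative integer and let a, c be complex numbers with (a)_n ≠ 0, (c)_n ≠ 0, and (2c−a−n−1)_n ≠ 0. Then _3F_2(−n, a/2, (a+1)/2 ; a, c ; 4) = (−1)^n · _3F_2(−n, (2c−a−n−1)/2, (2c−a−n)/2 ; 2c−a−n−1, c ; 4), both sides being finite sums over k from 0 to n. -/

import Mathlib

/-!
Multiplying by `(c)_n / n!` and using the duplication formula
`(a/2)_k ((a+1)/2)_k 4^k = (a)_{2k} = (a)_k (a+k)_k`, the left-hand side becomes
`L_n(a, c) = ∑_{i+j=n} (-1)^i ((a+i) multichoose i) ((c+i) multichoose j)` and the right-hand side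
`R_n(a, c) = (-1)^n L_n(2c-a-n-1, c)`. Both satisfy the contiguous relation
`F_{n+1}(c) - F_{n+1}(c+1) = -F_n(c+1)`; for `R` it follows from two steps `a ↦ a+1` and one step
`c ↦ c+1` of `L`. By induction on `n`, `L_n - R_n` is therefore a `1`-periodic polynomial in `c`,
hence constant. At `c = 1 - n` only the term `j = 0` survives, and both sides equal
`(-1)^n ((a+n) multichoose n)`, the right one by the reflection `(-x)_n = (-1)^n (x-n+1)_n`.
-/

open Finset

/-- The rising factorial (Pochhammer symbol) `(a)_k = a(a+1)⋯(a+k-1)`. -/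
noncomputable def poch (a : ℂ) (k : ℕ) : ℂ := ∏ i ∈ Finset.range k, (a + i)

open Polynomial
open scoped Nat

lemma poch_eq_eval_ascPochhammer (x : ℂ) (k : ℕ) : poch x k = (ascPochhammer ℂ k).eval x := by
  induction k with
  | zero => simp [poch]
  | succ k ih => rw [poch, prod_range_succ, ← poch, ih, ascPochhammer_succ_eval]

lemma poch_succ (x : ℂ) (k : ℕ) : poch x (k + 1) = poch x k * (x + k) := prod_range_succ _ _

lemma poch_add (x : ℂ) (m k : ℕ) : poch x (m + k) = poch x m * poch (x + m) k := by
  simp only [poch, prod_range_add, add_assoc, Nat.cast_add]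

lemma poch_succ' (x : ℂ) (k : ℕ) : poch x (k + 1) = x * poch (x + 1) k := by
  rw [add_comm k, poch_add]
  simp [poch]

lemma poch_ne_zero_of_le {x : ℂ} {m n : ℕ} (h : poch x n ≠ 0) (hmn : m ≤ n) :
    poch x m ≠ 0 := by
  obtain ⟨k, rfl⟩ := Nat.exists_eq_add_of_le hmn
  exact left_ne_zero_of_mul (poch_add x m k ▸ h)

lemma poch_neg_natCast_succ_self (n : ℕ) : poch (-n) (n + 1) = 0 := by
  simp [poch_succ]

lemma poch_neg (x : ℂ) (k : ℕ) : poch (-x) k = (-1) ^ k * poch (x - k + 1) k := by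
  rw [poch_eq_eval_ascPochhammer, ascPochhammer_eval_neg_eq_descPochhammer,
    descPochhammer_eval_eq_ascPochhammer, poch_eq_eval_ascPochhammer]

lemma poch_neg_natCast_mul_factorial {n k : ℕ} (hk : k ≤ n) :
    poch (-n) k * (n - k)! = (-1) ^ k * n ! := by
  rw [poch_eq_eval_ascPochhammer, ascPochhammer_eval_neg_eq_descPochhammer,
    descPochhammer_eval_eq_descFactorial, ← Nat.factorial_mul_descFactorial hk]
  push_cast
  ring

lemma poch_div_two_mul_poch_add_one_div_two (x : ℂ) (k : ℕ) :
    poch (x / 2) k * poch ((x + 1) / 2) k * 4 ^ k = poch x (2 * k) := by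
  induction k with
  | zero => simp [poch]
  | succ k ih =>
    rw [mul_add_one, poch_succ, poch_succ, poch_succ, poch_succ, ← ih]
    push_cast
    ring

noncomputable def multichoose (x : ℂ) (k : ℕ) : ℂ := poch x k / k !

lemma multichoose_zero (x : ℂ) : multichoose x 0 = 1 := by simp [multichoose, poch]

lemma multichoose_succ_sub_multichoose_add_one (x : ℂ) (k : ℕ) :
    multichoose x (k + 1) - multichoose (x + 1) (k + 1) = -multichoose (x + 1) k := by
  have h : poch x (k + 1) - poch (x + 1) (k + 1) = -(k + 1) * poch (x + 1) k := by
    rw [poch_succ', poch_succ]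
    ring
  simp only [multichoose, Nat.factorial_succ, Nat.cast_mul, ← sub_div, h]
  field_simp
  push_cast
  ring

noncomputable def leftSum (n : ℕ) (a c : ℂ) : ℂ :=
  ∑ p ∈ antidiagonal n, (-1) ^ p.1 * multichoose (a + p.1) p.1 * multichoose (c + p.1) p.2

noncomputable def rightSum (n : ℕ) (a c : ℂ) : ℂ :=
  (-1) ^ n * leftSum n (2 * c - a - n - 1) c

lemma leftSum_zero (a c : ℂ) : leftSum 0 a c = 1 := by
  simp [leftSum, multichoose_zero]

lemma leftSum_contiguous_c (m : ℕ) (a c : ℂ) :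
    leftSum (m + 1) a c - leftSum (m + 1) a (c + 1) = -leftSum m a (c + 1) := by
  simp only [leftSum, Finset.Nat.sum_antidiagonal_succ', multichoose_zero]
  rw [add_sub_add_left_eq_sub, ← sum_sub_distrib, ← sum_neg_distrib]
  refine sum_congr rfl fun p _ => ?_
  rw [← mul_sub, add_right_comm c, multichoose_succ_sub_multichoose_add_one]
  ring

lemma leftSum_contiguous_a (m : ℕ) (a c : ℂ) :
    leftSum (m + 1) a c - leftSum (m + 1) (a + 1) c = leftSum m (a + 2) (c + 1) := by
  simp only [leftSum, Finset.Nat.sum_antidiagonal_succ, multichoose_zero]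
  rw [add_sub_add_left_eq_sub, ← sum_sub_distrib]
  refine sum_congr rfl fun p _ => ?_
  have h := multichoose_succ_sub_multichoose_add_one (a + (p.1 + 1 : ℕ)) p.1
  have ha : a + (p.1 + 1 : ℕ) + 1 = a + 2 + p.1 := by push_cast; ring
  have hc : c + (p.1 + 1 : ℕ) = c + 1 + p.1 := by push_cast; ring
  rw [add_right_comm a 1, ← sub_mul, ← mul_sub, h, ha, hc]
  ring

lemma leftSum_one_sub (n : ℕ) (a : ℂ) :
    leftSum n a (1 - n) = (-1) ^ n * multichoose (a + n) n := by
  rw [leftSum, sum_eq_single (n, 0)]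
  · simp [multichoose_zero]
  · rintro ⟨i, _ | j⟩ hp hne
    · simp_all
    · have hi : 1 - (n : ℂ) + i = -j := by
        rw [← HasAntidiagonal.mem_antidiagonal.mp hp]
        push_cast
        ring
      simp only [hi, multichoose, poch_neg_natCast_succ_self, zero_div, mul_zero]
  · simp

lemma rightSum_contiguous_c (m : ℕ) (a c : ℂ) :
    rightSum (m + 1) a c - rightSum (m + 1) a (c + 1) = -rightSum m a (c + 1) := by
  set b := 2 * c - a - (m + 1 : ℕ) - 1
  have hb2 : 2 * (c + 1) - a - (m + 1 : ℕ) - 1 = b + 2 := by ring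
  have hb3 : 2 * (c + 1) - a - m - 1 = b + 3 := by simp only [b]; push_cast; ring
  have h₁ := leftSum_contiguous_a m b c
  have h₂ := leftSum_contiguous_a m (b + 1) c
  have h₃ := leftSum_contiguous_c m (b + 2) c
  rw [show b + 1 + 1 = b + 2 by ring, show b + 1 + 2 = b + 3 by ring] at h₂
  simp only [rightSum, hb2, hb3]
  linear_combination (-1 : ℂ) ^ (m + 1) * (h₁ + h₂ + h₃)

lemma rightSum_one_sub (n : ℕ) (a : ℂ) :
    rightSum n a (1 - n) = (-1) ^ n * multichoose (a + n) n := by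
  have hb : 2 * (1 - n : ℂ) - a - n - 1 + n = -(a + 2 * n - 1) := by ring
  have hsq : ((-1 : ℂ) ^ n) * (-1) ^ n = 1 := by rw [← mul_pow]; norm_num
  rw [rightSum, leftSum_one_sub, hb, multichoose, multichoose, poch_neg,
    show a + 2 * n - 1 - n + 1 = a + n by ring]
  linear_combination (-1 : ℂ) ^ n * poch (a + n) n / n ! * hsq

lemma exists_eval_eq_leftSum (n : ℕ) (p q : ℂ[X]) :
    ∃ P : ℂ[X], ∀ c, P.eval c = leftSum n (p.eval c) (q.eval c) := by
  refine ⟨∑ i ∈ antidiagonal n, C ((-1 : ℂ) ^ i.1 / (i.1 ! * i.2 !)) *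
    (ascPochhammer ℂ i.1).comp (p + C (i.1 : ℂ)) *
      (ascPochhammer ℂ i.2).comp (q + C (i.1 : ℂ)),
    fun c => ?_⟩
  simp only [leftSum, multichoose, eval_finsetSum, eval_mul, eval_C, eval_comp, eval_add,
    poch_eq_eval_ascPochhammer]
  refine sum_congr rfl fun i _ => ?_
  ring

lemma Polynomial.eq_zero_of_periodic {R : Type*} [CommRing R] [IsDomain R] [CharZero R]
    {p : R[X]} (hp : Function.Periodic (fun x => p.eval x) 1) {x : R} (hx : p.eval x = 0) :
    p = 0 := by
  refine eq_zero_of_infinite_isRoot p (Set.infinite_of_injective_forall_mem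
    ((add_right_injective x).comp Nat.cast_injective) fun j => ?_)
  simpa [IsRoot, hx] using hp.nat_mul j x

theorem leftSum_eq_rightSum (n : ℕ) (a c : ℂ) : leftSum n a c = rightSum n a c := by
  induction n generalizing a c with
  | zero => simp [rightSum, leftSum_zero]
  | succ m ih =>
    obtain ⟨P, hP⟩ := exists_eval_eq_leftSum (m + 1) (C a) X
    obtain ⟨Q, hQ⟩ :=
      exists_eval_eq_leftSum (m + 1) (C 2 * X - C a - C ((m + 1 : ℕ) : ℂ) - 1) X
    let D := P - C ((-1) ^ (m + 1)) * Q
    have hD (c : ℂ) : D.eval c = leftSum (m + 1) a c - rightSum (m + 1) a c := by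
      simp only [D, eval_sub, eval_mul, eval_C, eval_X, eval_one, hP, hQ, rightSum]
    have hper : Function.Periodic (fun c => D.eval c) 1 := fun c => by
      simp only [hD]
      linear_combination -leftSum_contiguous_c m a c + rightSum_contiguous_c m a c + ih a (c + 1)
    have h₀ : D.eval (1 - ((m + 1 : ℕ) : ℂ)) = 0 := by
      rw [hD, leftSum_one_sub, rightSum_one_sub, sub_self]
    simpa [hD, sub_eq_zero] using congr_arg (eval c) (eq_zero_of_periodic hper h₀)

lemma poch_mul_hypergeometric {n : ℕ} {x c : ℂ} (hx : poch x n ≠ 0) (hc : poch c n ≠ 0) :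
    poch c n * ∑ k ∈ range (n + 1),
      (poch (-(n : ℂ)) k * poch (x / 2) k * poch ((x + 1) / 2) k) /
        ((k ! : ℂ) * poch x k * poch c k) * 4 ^ k = n ! * leftSum n x c := by
  rw [leftSum, Finset.Nat.sum_antidiagonal_eq_sum_range_succ_mk, mul_sum, mul_sum]
  refine sum_congr rfl fun k hk => ?_
  have hkn : k ≤ n := Nat.lt_succ_iff.mp (mem_range.mp hk)
  have hdup : poch (x / 2) k * poch ((x + 1) / 2) k * 4 ^ k = poch x k * poch (x + k) k := by
    rw [poch_div_two_mul_poch_add_one_div_two, two_mul, poch_add]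
  have hsplit : poch c n = poch c k * poch (c + k) (n - k) := by
    rw [← poch_add, Nat.add_sub_cancel' hkn]
  have hneg := poch_neg_natCast_mul_factorial hkn
  have hxk := poch_ne_zero_of_le hx hkn
  have hck := poch_ne_zero_of_le hc hkn
  have hkfac : (k ! : ℂ) ≠ 0 := Nat.cast_ne_zero.mpr k.factorial_ne_zero
  have hnkfac : ((n - k) ! : ℂ) ≠ 0 := Nat.cast_ne_zero.mpr (n - k).factorial_ne_zero
  rw [hsplit, multichoose, multichoose]
  field_simp
  linear_combination poch (c + k) (n - k) *
    (((n - k) ! : ℂ) * poch (-(n : ℂ)) k * hdup + poch x k * poch (x + k) k * hneg)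

theorem stmt_9 (n : ℕ) (a c : ℂ)
    (ha : poch a n ≠ 0) (hc : poch c n ≠ 0)
    (h2c : poch (2 * c - a - (n : ℂ) - 1) n ≠ 0) :
    ∑ k ∈ range (n + 1),
      (poch (-(n : ℂ)) k * poch (a / 2) k * poch ((a + 1) / 2) k) /
        ((Nat.factorial k : ℂ) * poch a k * poch c k) * (4 : ℂ) ^ k
    = (-1 : ℂ) ^ n *
      ∑ k ∈ range (n + 1),
        (poch (-(n : ℂ)) k * poch ((2 * c - a - (n : ℂ) - 1) / 2) k *
          poch ((2 * c - a - (n : ℂ)) / 2) k) /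
          ((Nat.factorial k : ℂ) * poch (2 * c - a - (n : ℂ) - 1) k * poch c k) *
          (4 : ℂ) ^ k := by
  apply mul_left_cancel₀ hc
  rw [show (2 * c - a - n) / 2 = (2 * c - a - n - 1 + 1) / 2 by ring, mul_left_comm,
    poch_mul_hypergeometric ha hc, poch_mul_hypergeometric h2c hc, leftSum_eq_rightSum, rightSum,
    mul_left_comm]
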